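/- There exist vectors b, t, q ∈ ℝ³ such that (a) the matrix with columns b - (mean b)𝟏 and q - (mean q)𝟏 has rank 2, (b) the unique argmax index of q is 3, and (c) for every λ ∈ ℝ, index 3 is not an argmax of (1-λ)b + λt. In particular, scalar mixtures of (b,t) cannot realize the ranking behavior of q. -/

import Mathlib

/-- There exist `b, t, q ∈ ℝ³` such that the matrix with the centered columns
`b - mean(b)𝟏` and `q - mean(q)𝟏` has rank `2`, index `3` is the unique argmax
of `q`, and for every `λ` index `3` is not an argmax of `(1-λ)b + λt`. -/
theorem scalar_mixtures_not_universal :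
    ∃ b t q : Fin 3 → ℝ,
      (Matrix.of fun (i : Fin 3) (j : Fin 2) =>
          if j = 0 then b i - (∑ k, b k) / 3 else q i - (∑ k, q k) / 3).rank = 2 ∧
      (∀ j : Fin 3, j ≠ 2 → q j < q 2) ∧
      (∀ l : ℝ, ¬ ∀ j : Fin 3, (1 - l) * b j + l * t j ≤ (1 - l) * b 2 + l * t 2) := by
  refine ⟨![3, 2, 1], ![2, 3, 1], ![1, 1, 5], ?_, ?_, ?_⟩
  · set M : Matrix (Fin 3) (Fin 2) ℝ := Matrix.of fun (i : Fin 3) (j : Fin 2) =>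
      if j = 0 then ![(3:ℝ), 2, 1] i - (∑ k, ![(3:ℝ), 2, 1] k) / 3
      else ![(1:ℝ), 1, 5] i - (∑ k, ![(1:ℝ), 1, 5] k) / 3 with hM
    set N : Matrix (Fin 2) (Fin 3) ℝ := ![![1, 0, 0], ![0, 0, 1]] with hN
    have hNM : N * M = ![![1, -4/3], ![-1, 8/3]] := by
      ext i j
      fin_cases i <;> fin_cases j <;>
        simp only [Matrix.mul_apply, Fin.sum_univ_three] <;> simp [hM, hN, Fin.sum_univ_three] <;> norm_num
    have h2 : (N * M).rank = 2 := by
      rw [Matrix.rank_of_isUnit]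
      · simp
      · rw [Matrix.isUnit_iff_isUnit_det, Matrix.det_fin_two, hNM]
        norm_num
    refine le_antisymm (M.rank_le_width) ?_
    calc (2 : ℕ) = (N * M).rank := h2.symm
      _ ≤ M.rank := Matrix.rank_mul_le_right N M
  · intro j hj
    fin_cases j <;> simp_all <;> norm_num
  · intro l h
    have h0 := h 0
    have h1 := h 1
    simp at h0 h1
    linarith
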